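/- Let R be a Noetherian supercommutative superring and M a nonzero R-supermodule. Then the set D(M) consisting of 0 and the zerodivisors on M equals the union of the associated primes of M: D(M) = ⋃_{𝔭 ∈ 𝔞𝔰𝔰(M)} 𝔭. -/

import Mathlib

open DirectSum

/-- A `ZMod 2`-grading on a ring is supercommutative if homogeneous elements satisfy the
sign rule `x * y = (-1)^(|x||y|) * (y * x)`. -/
def SuperCommutative {R : Type*} [Ring R] (𝒜 : ZMod 2 → AddSubgroup R) : Prop :=
  ∀ (i j : ZMod 2) (x y : R), x ∈ 𝒜 i → y ∈ 𝒜 j →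
    x * y = ((-1 : ℤ) ^ (i.val * j.val)) • (y * x)

/-- `2` is a non-zerodivisor in `R`. -/
def TwoRegular (R : Type*) [Ring R] : Prop := ∀ x : R, 2 * x = 0 → x = 0

/-- A two-sided ideal is a superideal if it is graded, i.e. it contains the homogeneous
components of each of its elements. -/
def IsSuperIdeal {R : Type*} [Ring R] (𝒜 : ZMod 2 → AddSubgroup R) [GradedRing 𝒜]
    (I : TwoSidedIdeal R) : Prop :=
  ∀ x ∈ I, ∀ i, (DirectSum.decompose 𝒜 x i : R) ∈ I

/-- An ideal of a superring is prime if the quotient ring is an integral domain. -/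
def IsPrimeSuperIdeal {R : Type*} [Ring R] (I : TwoSidedIdeal R) : Prop :=
  IsDomain I.ringCon.Quotient

/-- An ideal of a superring is maximal if the quotient ring is a field. -/
def IsMaximalSuperIdeal {R : Type*} [Ring R] (I : TwoSidedIdeal R) : Prop :=
  IsField I.ringCon.Quotient

/-- A superring is Noetherian if it satisfies the ascending chain condition on superideals. -/
def SuperNoetherian {R : Type*} [Ring R] (𝒜 : ZMod 2 → AddSubgroup R) [GradedRing 𝒜] : Prop :=
  ∀ f : ℕ →o TwoSidedIdeal R, (∀ n, IsSuperIdeal 𝒜 (f n)) → ∃ n, ∀ m, n ≤ m → f m = f n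

/-- The action of a graded ring on a graded module is compatible with the gradings. -/
def GradedSMul {R : Type*} [Ring R] (𝒜 : ZMod 2 → AddSubgroup R)
    {M : Type*} [AddCommGroup M] [Module R M] (ℳ : ZMod 2 → AddSubgroup M) : Prop :=
  ∀ (i j : ZMod 2) (r : R) (m : M), r ∈ 𝒜 i → m ∈ ℳ j → r • m ∈ ℳ (i + j)

/-!
Let `a` kill a nonzero homogeneous `m₀`. Among annihilators of nonzero homogeneous elements that
contain `a` (all of them superideals), the Noetherian hypothesis provides a maximal one,
`P = Ann(m)`. If `x ∉ P` is homogeneous, then `Ann(x • m) ⊇ P`, hence `Ann(x • m) = P`, and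
supercommutativity turns `x * y ∈ P` into `y • (x • m) = 0`, i.e. `y ∈ P`. An odd `x` has
`x * x = 0` because `2` is regular, so all odd elements lie in `P`; testing the even part of an
arbitrary element then shows that `P` is prime.
-/

theorem DirectSum.decompose_zero_add_decompose_one {σ M : Type*} [AddCommMonoid M] [SetLike σ M]
    [AddSubmonoidClass σ M] (ℳ : ZMod 2 → σ) [Decomposition ℳ] (x : M) :
    (decompose ℳ x 0 : M) + decompose ℳ x 1 = x := by
  classical
  conv_rhs => rw [← sum_support_decompose ℳ x]
  rw [Finset.sum_subset (Finset.subset_univ _) fun i _ hi => by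
    rw [DFinsupp.notMem_support_iff.mp hi, ZeroMemClass.coe_zero]]
  exact (Fin.sum_univ_two fun i : ZMod 2 => (decompose ℳ x i : M)).symm

theorem DirectSum.exists_ne_zero_mem_of_ne_zero {ι σ M : Type*} [DecidableEq ι] [AddCommMonoid M]
    [SetLike σ M] [AddSubmonoidClass σ M] (ℳ : ι → σ) [Decomposition ℳ] {x : M} (hx : x ≠ 0) :
    ∃ m : M, m ≠ 0 ∧ ∃ i, m ∈ ℳ i := by
  by_contra! h
  have : decompose ℳ x = 0 := DFinsupp.ext fun i => by
    by_contra hi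
    exact h _ (fun h0 => hi (Subtype.ext h0)) i (SetLike.coe_mem _)
  exact hx ((decompose ℳ).injective (this.trans (decompose_zero ℳ).symm))

theorem SuperCommutative.mul_self_eq_zero_of_mem_one {R : Type*} [Ring R]
    {𝒜 : ZMod 2 → AddSubgroup R} (hsc : SuperCommutative 𝒜) (h2 : TwoRegular R) {x : R}
    (hx : x ∈ 𝒜 1) : x * x = 0 := by
  have hanti := hsc 1 1 x x hx hx
  rw [show (1 : ZMod 2).val * (1 : ZMod 2).val = 1 from rfl, pow_one, neg_one_zsmul] at hanti
  refine h2 _ ?_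
  rw [two_mul]
  nth_rewrite 1 [hanti]
  exact neg_add_cancel _

theorem SuperCommutative.mul_smul_eq_zero_comm {R M : Type*} [Ring R] [AddCommGroup M]
    [Module R M] {𝒜 : ZMod 2 → AddSubgroup R} (hsc : SuperCommutative 𝒜) {i j : ZMod 2}
    {x y : R} (hx : x ∈ 𝒜 i) (hy : y ∈ 𝒜 j) {m : M} (h : (x * y) • m = 0) :
    (y * x) • m = 0 := by
  rw [hsc j i y x hy hx, smul_assoc, h, smul_zero]

theorem isPrimeSuperIdeal_of_mul_mem {R : Type*} [Ring R] {I : TwoSidedIdeal R}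
    (h1 : (1 : R) ∉ I) (hI : ∀ x y : R, x * y ∈ I → x ∈ I ∨ y ∈ I) : IsPrimeSuperIdeal I := by
  have hmk (x : R) : (x : I.ringCon.Quotient) = 0 ↔ x ∈ I := RingCon.eq _
  have : Nontrivial I.ringCon.Quotient := ⟨⟨1, 0, fun h => h1 ((hmk 1).1 h)⟩⟩
  have : NoZeroDivisors I.ringCon.Quotient := ⟨fun {u v} => by
    induction u using Quotient.inductionOn
    induction v using Quotient.inductionOn
    exact fun huv => (hI _ _ ((hmk _).1 huv)).imp (hmk _).2 (hmk _).2⟩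
  exact NoZeroDivisors.to_isDomain _

section SuperModule

variable {R : Type*} [Ring R] {𝒜 : ZMod 2 → AddSubgroup R} [GradedRing 𝒜]
  {M : Type*} [AddCommGroup M] [Module R M] {ℳ : ZMod 2 → AddSubgroup M} [Decomposition ℳ]

theorem coe_decompose_smul_add_of_mem (hact : GradedSMul 𝒜 ℳ) {m : M} {k : ZMod 2}
    (hm : m ∈ ℳ k) (r : R) (j : ZMod 2) :
    (decompose ℳ (r • m) (j + k) : M) = (decompose 𝒜 r j : R) • m := by
  have hr₀ := hact 0 k _ m (SetLike.coe_mem (decompose 𝒜 r 0)) hm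
  have hr₁ := hact 1 k _ m (SetLike.coe_mem (decompose 𝒜 r 1)) hm
  have hne : (0 : ZMod 2) + k ≠ 1 + k := (add_left_injective k).ne (by decide)
  conv_lhs => rw [← decompose_zero_add_decompose_one 𝒜 r, add_smul, decompose_add,
    DirectSum.add_apply, AddMemClass.coe_add]
  rcases (by decide : ∀ j : ZMod 2, j = 0 ∨ j = 1) j with rfl | rfl
  · rw [decompose_of_mem_same ℳ hr₀, decompose_of_mem_ne ℳ hr₁ hne.symm, add_zero]
  · rw [decompose_of_mem_same ℳ hr₁, decompose_of_mem_ne ℳ hr₀ hne, zero_add]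

theorem decompose_smul_eq_zero_of_smul_eq_zero (hact : GradedSMul 𝒜 ℳ) {m : M} {k : ZMod 2}
    (hm : m ∈ ℳ k) {r : R} (hr : r • m = 0) (j : ZMod 2) : (decompose 𝒜 r j : R) • m = 0 := by
  rw [← coe_decompose_smul_add_of_mem hact hm, hr, decompose_zero, DirectSum.zero_apply,
    ZeroMemClass.coe_zero]

theorem SuperCommutative.mul_smul_eq_zero_of_mem (hsc : SuperCommutative 𝒜) {i : ZMod 2}
    {r : R} (hr : r ∈ 𝒜 i) {m : M} (hrm : r • m = 0) (s : R) : (r * s) • m = 0 := by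
  have hcomp (j : ZMod 2) : (r * (decompose 𝒜 s j : R)) • m = 0 :=
    hsc.mul_smul_eq_zero_comm (SetLike.coe_mem _) hr (by rw [mul_smul, hrm, smul_zero])
  rw [← decompose_zero_add_decompose_one 𝒜 s, mul_add, add_smul, hcomp, hcomp, add_zero]

theorem mul_smul_eq_zero_of_smul_eq_zero (hsc : SuperCommutative 𝒜) (hact : GradedSMul 𝒜 ℳ)
    {m : M} {k : ZMod 2} (hm : m ∈ ℳ k) {r : R} (hr : r • m = 0) (s : R) :
    (r * s) • m = 0 := by
  have hcomp (j : ZMod 2) : ((decompose 𝒜 r j : R) * s) • m = 0 :=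
    hsc.mul_smul_eq_zero_of_mem (SetLike.coe_mem _)
      (decompose_smul_eq_zero_of_smul_eq_zero hact hm hr j) s
  rw [← decompose_zero_add_decompose_one 𝒜 r, add_mul, add_smul, hcomp, hcomp, add_zero]

theorem mul_comm_smul_eq_zero_of_mem (hsc : SuperCommutative 𝒜) (hact : GradedSMul 𝒜 ℳ)
    {i : ZMod 2} {x : R} (hx : x ∈ 𝒜 i) {m : M} {k : ZMod 2} (hm : m ∈ ℳ k) {y : R}
    (h : (x * y) • m = 0) : (y * x) • m = 0 := by
  have hcomp (j : ZMod 2) : ((decompose 𝒜 y j : R) * x) • m = 0 := by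
    have := decompose_smul_eq_zero_of_smul_eq_zero hact hm h (i + j)
    rw [coe_decompose_mul_add_of_left_mem 𝒜 hx] at this
    exact hsc.mul_smul_eq_zero_comm hx (SetLike.coe_mem _) this
  rw [← decompose_zero_add_decompose_one 𝒜 y, add_mul, add_smul, hcomp, hcomp, add_zero]

def superAnnihilator (hsc : SuperCommutative 𝒜) (hact : GradedSMul 𝒜 ℳ) {m : M} {k : ZMod 2}
    (hm : m ∈ ℳ k) : TwoSidedIdeal R :=
  TwoSidedIdeal.mk' {r | r • m = 0} (zero_smul R m)
    (fun {x y} (hx : x • m = 0) (hy : y • m = 0) =>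
      show (x + y) • m = 0 by rw [add_smul, hx, hy, add_zero])
    (fun {x} (hx : x • m = 0) => show (-x) • m = 0 by rw [neg_smul, hx, neg_zero])
    (fun {x y} (hy : y • m = 0) => show (x * y) • m = 0 by rw [mul_smul, hy, smul_zero])
    (fun {_ y} hx => mul_smul_eq_zero_of_smul_eq_zero hsc hact hm hx y)

@[simp]
theorem mem_superAnnihilator (hsc : SuperCommutative 𝒜) (hact : GradedSMul 𝒜 ℳ) {m : M}
    {k : ZMod 2} (hm : m ∈ ℳ k) (r : R) : r ∈ superAnnihilator hsc hact hm ↔ r • m = 0 :=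
  TwoSidedIdeal.mem_mk' _ _ _ _ _ _ r

theorem isSuperIdeal_of_forall_mem_iff_smul_eq_zero (hact : GradedSMul 𝒜 ℳ) {m : M}
    {k : ZMod 2} (hm : m ∈ ℳ k) {I : TwoSidedIdeal R} (hI : ∀ r, r ∈ I ↔ r • m = 0) :
    IsSuperIdeal 𝒜 I :=
  fun x hx j => (hI _).2 (decompose_smul_eq_zero_of_smul_eq_zero hact hm ((hI x).1 hx) j)

theorem isPrimeSuperIdeal_of_forall_homogeneous (hsc : SuperCommutative 𝒜) (h2 : TwoRegular R)
    {I : TwoSidedIdeal R} (h1 : (1 : R) ∉ I)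
    (hhom : ∀ i x, x ∈ 𝒜 i → x ∉ I → ∀ y, x * y ∈ I → y ∈ I) : IsPrimeSuperIdeal I := by
  have hodd : ∀ x ∈ 𝒜 1, x ∈ I := fun x hx => by
    by_contra hxI
    exact hxI (hhom 1 x hx hxI x (by rw [hsc.mul_self_eq_zero_of_mem_one h2 hx]; exact I.zero_mem))
  refine isPrimeSuperIdeal_of_mul_mem h1 fun x y hxy => or_iff_not_imp_right.2 fun hy => ?_
  have hx₁ := hodd _ (SetLike.coe_mem (decompose 𝒜 x 1))
  rw [← decompose_zero_add_decompose_one 𝒜 x] at hxy ⊢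
  refine I.add_mem (by_contra fun hx₀ => hy (hhom 0 _ (SetLike.coe_mem _) hx₀ y ?_)) hx₁
  simpa [add_mul] using I.sub_mem hxy (I.mul_mem_right _ y hx₁)

theorem SuperNoetherian.exists_maximal (hN : SuperNoetherian 𝒜) {S : Set (TwoSidedIdeal R)}
    (hS : ∀ I ∈ S, IsSuperIdeal 𝒜 I) (hne : S.Nonempty) : ∃ P ∈ S, ∀ J ∈ S, P ≤ J → J = P := by
  have : WellFoundedGT {I : TwoSidedIdeal R // IsSuperIdeal 𝒜 I} :=
    wellFoundedGT_iff_monotone_chain_condition.2 fun f => by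
      obtain ⟨n, hn⟩ := hN ⟨fun n => (f n).1, fun _ _ h => f.mono h⟩ fun n => (f n).2
      exact ⟨n, fun m hm => Subtype.ext (hn m hm).symm⟩
  obtain ⟨I, hI⟩ := hne
  obtain ⟨⟨P, _⟩, hPS, hPmax⟩ :=
    wellFounded_gt.has_min {J : {I // IsSuperIdeal 𝒜 I} | J.1 ∈ S} ⟨⟨I, hS I hI⟩, hI⟩
  exact ⟨P, hPS, fun J hJ hPJ => (eq_of_le_of_not_lt hPJ fun hlt => hPmax ⟨J, hS J hJ⟩ hJ hlt).symm⟩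

theorem isPrimeSuperIdeal_of_annihilator_maximal (hsc : SuperCommutative 𝒜) (h2 : TwoRegular R)
    (hact : GradedSMul 𝒜 ℳ) {P : TwoSidedIdeal R} {m : M} {k : ZMod 2} (hm : m ∈ ℳ k)
    (hm0 : m ≠ 0) (hP : ∀ r, r ∈ P ↔ r • m = 0)
    (hmax : ∀ m' : M, m' ≠ 0 → (∃ i, m' ∈ ℳ i) → (∀ r : R, r • m = 0 → r • m' = 0) →
      ∀ r : R, r • m' = 0 → r • m = 0) :
    IsPrimeSuperIdeal P := by
  refine isPrimeSuperIdeal_of_forall_homogeneous hsc h2 (fun h1 => hm0 ?_)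
    fun i x hx hxP y hxy => ?_
  · simpa using (hP 1).1 h1
  rw [hP] at hxP hxy ⊢
  refine hmax (x • m) hxP ⟨i + k, hact i k x m hx hm⟩ (fun r hr => ?_) y ?_
  · rw [← mul_smul]
    exact mul_smul_eq_zero_of_smul_eq_zero hsc hact hm hr x
  · rw [← mul_smul]
    exact mul_comm_smul_eq_zero_of_mem hsc hact hx hm hxy

theorem exists_isPrimeSuperIdeal_annihilator_mem (hsc : SuperCommutative 𝒜) (h2 : TwoRegular R)
    (hN : SuperNoetherian 𝒜) (hact : GradedSMul 𝒜 ℳ) {m₀ : M} {k₀ : ZMod 2} (hm₀ : m₀ ∈ ℳ k₀)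
    (hm₀0 : m₀ ≠ 0) {a : R} (ha : a • m₀ = 0) :
    ∃ 𝔭 : TwoSidedIdeal R, (IsPrimeSuperIdeal 𝔭 ∧
      ∃ m : M, m ≠ 0 ∧ (∃ i, m ∈ ℳ i) ∧ ∀ r : R, r ∈ 𝔭 ↔ r • m = 0) ∧ a ∈ 𝔭 := by
  set S : Set (TwoSidedIdeal R) :=
    {I | (∃ m : M, m ≠ 0 ∧ (∃ i, m ∈ ℳ i) ∧ ∀ r : R, r ∈ I ↔ r • m = 0) ∧ a ∈ I}
  have hann {m : M} {k : ZMod 2} (hm : m ∈ ℳ k) (hm0 : m ≠ 0) (ham : a • m = 0) :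
      superAnnihilator hsc hact hm ∈ S :=
    ⟨⟨m, hm0, ⟨k, hm⟩, mem_superAnnihilator hsc hact hm⟩,
      (mem_superAnnihilator hsc hact hm a).2 ham⟩
  have hS : ∀ I ∈ S, IsSuperIdeal 𝒜 I := by
    rintro I ⟨⟨m, -, ⟨k, hm⟩, hI⟩, -⟩
    exact isSuperIdeal_of_forall_mem_iff_smul_eq_zero hact hm hI
  obtain ⟨P, ⟨⟨m, hm0, ⟨k, hm⟩, hP⟩, haP⟩, hPmax⟩ := hN.exists_maximal hS ⟨_, hann hm₀ hm₀0 ha⟩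
  refine ⟨P, ⟨isPrimeSuperIdeal_of_annihilator_maximal hsc h2 hact hm hm0 hP ?_,
    m, hm0, ⟨k, hm⟩, hP⟩, haP⟩
  rintro m' hm'0 ⟨i, hm'⟩ hsub r hr
  have hPJ : P ≤ superAnnihilator hsc hact hm' :=
    fun s hs => (mem_superAnnihilator hsc hact hm' s).2 (hsub s ((hP s).1 hs))
  rw [← hP, ← hPmax _ (hann hm' hm'0 (hsub a ((hP a).1 haP))) hPJ]
  exact (mem_superAnnihilator hsc hact hm' r).2 hr

end SuperModule

/-- Over a Noetherian superring, the set `D(M)` consisting of `0` and the zerodivisors on a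
nonzero supermodule `M` is the union of the associated primes of `M`. -/
theorem zerodivisors_eq_union_associated_primes {R : Type*} [Ring R]
    (𝒜 : ZMod 2 → AddSubgroup R) [GradedRing 𝒜]
    (hsc : SuperCommutative 𝒜) (h2 : TwoRegular R) (hN : SuperNoetherian 𝒜)
    (M : Type*) [AddCommGroup M] [Module R M] (ℳ : ZMod 2 → AddSubgroup M)
    [DirectSum.Decomposition ℳ] (hact : GradedSMul 𝒜 ℳ)
    (hM : ∃ m : M, m ≠ 0) :
    {a : R | a = 0 ∨ ∃ m : M, m ≠ 0 ∧ (∃ i, m ∈ ℳ i) ∧ a • m = 0} =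
      {a : R | ∃ 𝔭 : TwoSidedIdeal R, (IsPrimeSuperIdeal 𝔭 ∧
        ∃ m : M, m ≠ 0 ∧ (∃ i, m ∈ ℳ i) ∧ ∀ r : R, r ∈ 𝔭 ↔ r • m = 0) ∧ a ∈ 𝔭} := by
  ext a
  constructor
  · rintro (rfl | ⟨m, hm0, ⟨k, hm⟩, ham⟩)
    · obtain ⟨x, hx⟩ := hM
      obtain ⟨m, hm0, k, hm⟩ := exists_ne_zero_mem_of_ne_zero ℳ hx
      exact exists_isPrimeSuperIdeal_annihilator_mem hsc h2 hN hact hm hm0 (zero_smul R m)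
    · exact exists_isPrimeSuperIdeal_annihilator_mem hsc h2 hN hact hm hm0 ham
  · rintro ⟨𝔭, ⟨-, m, hm0, hmi, h𝔭⟩, ha⟩
    exact Or.inr ⟨m, hm0, hmi, (h𝔭 a).1 ha⟩
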